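/- arXiv:2208.01139 — 3 statements merged into one kernel-verified Lean document; each statement's English description precedes it below -/
import Mathlib

section
/- Let U(x,y) = x²(x² + y²) on ℝ². For any real analytic (or even continuous) function f defined on a neighbourhood of the origin, the vector field V = ∂_y + x·f·∂_x is not logarithmic for U at the origin: the function P = V(U)/U, defined for x ≠ 0, satisfies P(x,x) → ∞ as x → 0⁺, hence P has no continuous extension to the origin. -/
set_option maxHeartbeats 1000000 in
/-- For `U(x,y) = x²(x²+y²)` and any `f` continuous near the origin, the vector
field `V = ∂_y + x·f·∂_x` is not logarithmic for `U` at the origin: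
`V(U)/U` blows up along the diagonal, so no continuous `P` with `V(U) = P·U`
exists near the origin. Here `V(U) = 2x²y + x·f·(4x³+2xy²)`. -/
theorem stmt_1 (f : ℝ × ℝ → ℝ) (hf : ContinuousAt f (0, 0))
    (VU : ℝ × ℝ → ℝ)
    (hVU : ∀ p : ℝ × ℝ,
      VU p = 2 * p.1 ^ 2 * p.2 + p.1 * f p * (4 * p.1 ^ 3 + 2 * p.1 * p.2 ^ 2)) :
    Filter.Tendsto (fun x : ℝ => VU (x, x) / (x ^ 2 * (x ^ 2 + x ^ 2)))
      (nhdsWithin 0 (Set.Ioi 0)) Filter.atTop ∧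
    ¬ ∃ P : ℝ × ℝ → ℝ, ContinuousAt P (0, 0) ∧
        ∀ᶠ p : ℝ × ℝ in nhds (0, 0), VU p = P p * (p.1 ^ 2 * (p.1 ^ 2 + p.2 ^ 2)) := by
  have hdiag : Filter.Tendsto (fun x : ℝ => ((x, x) : ℝ × ℝ))
      (nhdsWithin 0 (Set.Ioi 0)) (nhds (0, 0)) := by
    apply Filter.Tendsto.mono_left _ nhdsWithin_le_nhds
    exact (continuous_id.prodMk continuous_id).tendsto 0
  have heq : ∀ x : ℝ, x ∈ Set.Ioi (0 : ℝ) →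
      VU (x, x) / (x ^ 2 * (x ^ 2 + x ^ 2)) = x⁻¹ + 3 * f (x, x) := by
    intro x hx
    have hx0 : x ≠ 0 := ne_of_gt hx
    rw [hVU]
    field_simp
    ring
  have h1 : Filter.Tendsto (fun x : ℝ => x⁻¹ + 3 * f (x, x))
      (nhdsWithin 0 (Set.Ioi 0)) Filter.atTop := by
    have h2 : Filter.Tendsto (fun x : ℝ => 3 * f (x, x))
        (nhdsWithin 0 (Set.Ioi 0)) (nhds (3 * f (0, 0))) :=
      (hf.tendsto.comp hdiag).const_mul 3
    exact tendsto_inv_nhdsGT_zero.atTop_add h2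
  have hmain : Filter.Tendsto (fun x : ℝ => VU (x, x) / (x ^ 2 * (x ^ 2 + x ^ 2)))
      (nhdsWithin 0 (Set.Ioi 0)) Filter.atTop := by
    refine h1.congr' ?_
    filter_upwards [self_mem_nhdsWithin] with x hx using (heq x hx).symm
  refine ⟨hmain, ?_⟩
  rintro ⟨P, hP, hev⟩
  have hPd : Filter.Tendsto (fun x : ℝ => P (x, x))
      (nhdsWithin 0 (Set.Ioi 0)) (nhds (P (0, 0))) := hP.tendsto.comp hdiag
  have hcongr : (fun x : ℝ => VU (x, x) / (x ^ 2 * (x ^ 2 + x ^ 2))) =ᶠ[nhdsWithin 0 (Set.Ioi 0)]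
      (fun x : ℝ => P (x, x)) := by
    filter_upwards [self_mem_nhdsWithin, hdiag.eventually hev] with x hx hVx
    have hx0 : x ≠ 0 := ne_of_gt hx
    rw [hVx]
    field_simp
  exact not_tendsto_nhds_of_tendsto_atTop (hmain.congr' hcongr) _ hPd
end

section
/- Let U(x,y,z) = x² + y² on ℝ³ and V = x∂_x + 2y∂_y + ∂_z. Then V(U) = P·U where P(x,y,z) = 2(1 + y²/(x²+y²)) for (x,y) ≠ (0,0), and P is bounded (2 ≤ P ≤ 4) on its domain but does not extend continuously to the z-axis. Hence V is weakly logarithmic for U but not smoothly logarithmic. -/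
/-- For `U(x,y,z) = x²+y²` and `V = x∂_x + 2y∂_y + ∂_z`, one has `V(U) = P·U`
with `P = 2(1 + y²/(x²+y²))`, `2 ≤ P ≤ 4` away from the z-axis, but `P` has no
continuous extension to the z-axis: `V` is weakly but not smoothly logarithmic. -/
theorem stmt_2 (U : ℝ × ℝ × ℝ → ℝ) (hU : ∀ p : ℝ × ℝ × ℝ, U p = p.1 ^ 2 + p.2.1 ^ 2)
    (P : ℝ × ℝ × ℝ → ℝ)
    (hP : ∀ p : ℝ × ℝ × ℝ, P p = 2 * (1 + p.2.1 ^ 2 / (p.1 ^ 2 + p.2.1 ^ 2))) :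
    (∀ p : ℝ × ℝ × ℝ, (p.1, p.2.1) ≠ ((0 : ℝ), (0 : ℝ)) →
        p.1 * (2 * p.1) + 2 * p.2.1 * (2 * p.2.1) = P p * U p) ∧
    (∀ p : ℝ × ℝ × ℝ, (p.1, p.2.1) ≠ ((0 : ℝ), (0 : ℝ)) → 2 ≤ P p ∧ P p ≤ 4) ∧
    ¬ ∃ Q : ℝ × ℝ × ℝ → ℝ, Continuous Q ∧
        ∀ p : ℝ × ℝ × ℝ, (p.1, p.2.1) ≠ ((0 : ℝ), (0 : ℝ)) → Q p = P p := by
  have hpos : ∀ p : ℝ × ℝ × ℝ, (p.1, p.2.1) ≠ ((0 : ℝ), (0 : ℝ)) →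
      0 < p.1 ^ 2 + p.2.1 ^ 2 := by
    intro p hp
    rcases eq_or_ne p.1 0 with h1 | h1
    · have h2 : p.2.1 ≠ 0 := by
        intro h2; exact hp (by simp [h1, h2, Prod.ext_iff])
      positivity
    · positivity
  refine ⟨?_, ?_, ?_⟩
  · intro p hp
    have h := hpos p hp
    rw [hP, hU]
    field_simp
    ring
  · intro p hp
    have h := hpos p hp
    rw [hP]
    constructor
    · nlinarith [div_nonneg (sq_nonneg p.2.1) h.le]
    · have : p.2.1 ^ 2 / (p.1 ^ 2 + p.2.1 ^ 2) ≤ 1 := by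
        rw [div_le_one h]; nlinarith [sq_nonneg p.1]
      linarith
  · rintro ⟨Q, hQc, hQ⟩
    have key : ∀ (f : ℝ → ℝ × ℝ × ℝ) (c : ℝ), Continuous f → f 0 = (0, 0, 0) →
        (∀ t : ℝ, t ≠ 0 → Q (f t) = c) → Q (0, 0, 0) = c := by
      intro f c hf hf0 hc
      have h1 : Filter.Tendsto (fun t => Q (f t)) (nhdsWithin 0 {(0:ℝ)}ᶜ)
          (nhds (Q (0, 0, 0))) := by
        have := (hQc.comp hf).tendsto 0
        rw [Function.comp, hf0] at this
        exact this.mono_left nhdsWithin_le_nhds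
      have h2 : Filter.Tendsto (fun t => Q (f t)) (nhdsWithin 0 {(0:ℝ)}ᶜ)
          (nhds c) := by
        apply Filter.Tendsto.congr' _ tendsto_const_nhds
        filter_upwards [self_mem_nhdsWithin] with t ht
        exact (hc t ht).symm
      exact tendsto_nhds_unique h1 h2
    have hA : Q (0, 0, 0) = 2 := by
      apply key (fun t => (t, 0, 0)) 2 (continuous_id.prodMk continuous_const) rfl
      intro t ht
      rw [hQ _ (by simp [Prod.ext_iff, ht]), hP]
      simp
    have hB : Q (0, 0, 0) = 4 := by
      apply key (fun t => (0, t, 0)) 4 (continuous_const.prodMk (continuous_id.prodMk continuous_const)) rfl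
      intro t ht
      rw [hQ _ (by simp [Prod.ext_iff, ht]), hP]
      have : t ^ 2 ≠ 0 := pow_ne_zero _ ht
      field_simp
      ring
    rw [hA] at hB
    norm_num at hB
end

section
/- Let U be smooth and nonnegative on ℝⁿ, p a point with U(p) = 0, v₀ a vector, and (ε_n) a sequence of positive reals with ε_n → 0. Let x_n solve ẍ_n = −ε_n⁻²∇U(x_n), x_n(0)=p, ẋ_n(0)=v₀, and fix T > 0. Then there is a subsequence of (x_n) converging uniformly on [−T,T] to a continuous curve x with x(0) = p and U(x(t)) = 0 for all t ∈ [−T,T]. -/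
open scoped RealInnerProductSpace BoundedContinuousFunction

set_option synthInstance.maxHeartbeats 1000000
set_option maxHeartbeats 1000000

/-- The limit curve: for solutions `x_n` of `ẍ = −ε_n⁻²∇U(x)` with `x_n(0)=p`,
`ẋ_n(0)=v₀`, `ε_n → 0`, some subsequence converges uniformly on `[−T,T]` to a
continuous curve `y` with `y(0)=p` contained in the zero locus of `U`. -/
theorem stmt_7 (n : ℕ) (U : EuclideanSpace ℝ (Fin n) → ℝ)
    (hU : ContDiff ℝ (⊤ : ℕ∞) U) (hU0 : ∀ x, 0 ≤ U x)
    (p v₀ : EuclideanSpace ℝ (Fin n)) (hp : U p = 0)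
    (ε : ℕ → ℝ) (hε : ∀ m, 0 < ε m)
    (hεlim : Filter.Tendsto ε Filter.atTop (nhds 0))
    (x v : ℕ → ℝ → EuclideanSpace ℝ (Fin n))
    (hx0 : ∀ m, x m 0 = p) (hv0 : ∀ m, v m 0 = v₀)
    (hx : ∀ m, ∀ τ : ℝ, HasDerivAt (x m) (v m τ) τ)
    (hv : ∀ m, ∀ τ : ℝ, HasDerivAt (v m) (-((ε m)⁻¹ ^ 2) • gradient U (x m τ)) τ)
    (T : ℝ) (hT : 0 < T) :
    ∃ φ : ℕ → ℕ, StrictMono φ ∧ ∃ y : ℝ → EuclideanSpace ℝ (Fin n),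
      ContinuousOn y (Set.Icc (-T) T) ∧ y 0 = p ∧
      TendstoUniformlyOn (fun m => x (φ m)) y Filter.atTop (Set.Icc (-T) T) ∧
      ∀ t ∈ Set.Icc (-T) T, U (y t) = 0 := by
  classical
  -- gradient facts
  have hUdiff : Differentiable ℝ U := hU.differentiable (by simp)
  have hDU : ∀ m t, HasDerivAt (fun τ => U (x m τ))
      (⟪gradient U (x m t), v m t⟫) t := by
    intro m t
    have hg : HasGradientAt U (gradient U (x m t)) (x m t) :=
      (hUdiff (x m t)).hasGradientAt
    have hf : HasFDerivAt U ((InnerProductSpace.toDual ℝ _) (gradient U (x m t)))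
        (x m t) := hasGradientAt_iff_hasFDerivAt.mp hg
    simpa [InnerProductSpace.toDual_apply_apply, Function.comp_def] using hf.comp_hasDerivAt t (hx m t)
  -- energy conservation
  have energy : ∀ m t, ‖v m t‖ ^ 2 + 2 * ((ε m)⁻¹ ^ 2) * U (x m t) = ‖v₀‖ ^ 2 := by
    intro m t
    set Em : ℝ → ℝ := fun τ => ‖v m τ‖ ^ 2 + 2 * ((ε m)⁻¹ ^ 2) * U (x m τ) with hEm
    have hderiv : ∀ τ, HasDerivAt Em 0 τ := by
      intro τ
      have h1 : HasDerivAt (fun s => ⟪v m s, v m s⟫)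
          (⟪v m τ, -((ε m)⁻¹ ^ 2) • gradient U (x m τ)⟫ +
           ⟪-((ε m)⁻¹ ^ 2) • gradient U (x m τ), v m τ⟫) τ :=
        HasDerivAt.inner ℝ (hv m τ) (hv m τ)
      have h1' : HasDerivAt (fun s => ‖v m s‖ ^ 2)
          (⟪v m τ, -((ε m)⁻¹ ^ 2) • gradient U (x m τ)⟫ +
           ⟪-((ε m)⁻¹ ^ 2) • gradient U (x m τ), v m τ⟫) τ := by
        simpa only [real_inner_self_eq_norm_sq] using h1
      have h2 := (hDU m τ).const_mul (2 * ((ε m)⁻¹ ^ 2))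
      have h3 := h1'.add h2
      have hzero : (⟪v m τ, -((ε m)⁻¹ ^ 2) • gradient U (x m τ)⟫ +
           ⟪-((ε m)⁻¹ ^ 2) • gradient U (x m τ), v m τ⟫) +
           2 * ((ε m)⁻¹ ^ 2) * ⟪gradient U (x m τ), v m τ⟫ = 0 := by
        rw [real_inner_smul_right, real_inner_smul_left,
          real_inner_comm (v m τ) (gradient U (x m τ))]
        ring
      rw [hzero] at h3
      exact h3
    have hconst : Em t = Em 0 :=
      is_const_of_deriv_eq_zero (fun τ => (hderiv τ).differentiableAt)
        (fun τ => (hderiv τ).deriv) t 0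
    have : Em 0 = ‖v₀‖ ^ 2 := by simp [hEm, hx0 m, hv0 m, hp]
    simpa [hEm] using hconst.trans this
  have hvle : ∀ m t, ‖v m t‖ ≤ ‖v₀‖ := by
    intro m t
    have h := energy m t
    have h1 : 0 ≤ 2 * ((ε m)⁻¹ ^ 2) * U (x m t) := by
      have := hU0 (x m t)
      positivity
    nlinarith [norm_nonneg (v m t), norm_nonneg v₀]
  have hUle : ∀ m t, U (x m t) ≤ (ε m) ^ 2 * ‖v₀‖ ^ 2 / 2 := by
    intro m t
    have h := energy m t
    have hne : ε m ≠ 0 := (hε m).ne'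
    have h2 : 2 * ((ε m)⁻¹ ^ 2) * U (x m t) ≤ ‖v₀‖ ^ 2 := by
      nlinarith [sq_nonneg (‖v m t‖)]
    have h3 : (ε m) ^ 2 * (2 * ((ε m)⁻¹ ^ 2) * U (x m t)) = 2 * U (x m t) := by
      field_simp
    have h4 := mul_le_mul_of_nonneg_left h2 (sq_nonneg (ε m))
    rw [h3] at h4
    linarith
  -- Lipschitz bound
  set C : ℝ := ‖v₀‖ with hC
  have hlip : ∀ m, LipschitzWith ‖v₀‖₊ (x m) := by
    intro m
    refine lipschitzWith_of_nnnorm_deriv_le (fun t => (hx m t).differentiableAt) ?_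
    intro t
    rw [(hx m t).deriv]
    exact hvle m t
  -- continuity of each x m
  have hxc : ∀ m, Continuous (x m) := fun m => (hlip m).continuous
  -- set up Arzelà–Ascoli
  haveI : CompactSpace (Set.Icc (-T) T) := isCompact_iff_compactSpace.mp isCompact_Icc
  set f : ℕ → (Set.Icc (-T) T →ᵇ EuclideanSpace ℝ (Fin n)) := fun m =>
    BoundedContinuousFunction.mkOfCompact
      ⟨fun t => x m t, (hxc m).comp continuous_subtype_val⟩ with hf
  have hfapp : ∀ m (t : Set.Icc (-T) T), f m t = x m (t : ℝ) := fun _ _ => rfl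
  set s : Set (EuclideanSpace ℝ (Fin n)) := Metric.closedBall p (C * T) with hs
  have hscomp : IsCompact s := isCompact_closedBall p (C * T)
  have in_s : ∀ m (t : Set.Icc (-T) T), f m t ∈ s := by
    intro m t
    rw [hfapp]
    have h1 : dist (x m (t : ℝ)) (x m 0) ≤ C * dist (t : ℝ) 0 :=
      (hlip m).dist_le_mul _ _
    have h2 : dist (t : ℝ) 0 ≤ T := by
      rw [Real.dist_eq, sub_zero]
      exact abs_le.mpr ⟨t.2.1, t.2.2⟩
    have hCn : 0 ≤ C := norm_nonneg _
    have : dist (x m (t : ℝ)) p ≤ C * T := by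
      calc dist (x m (t : ℝ)) p = dist (x m (t : ℝ)) (x m 0) := by rw [hx0 m]
        _ ≤ C * dist (t : ℝ) 0 := h1
        _ ≤ C * T := by nlinarith
    exact Metric.mem_closedBall.mpr this
  set A : Set (Set.Icc (-T) T →ᵇ EuclideanSpace ℝ (Fin n)) := Set.range f with hA
  have equicont : Equicontinuous ((↑) : A → Set.Icc (-T) T → EuclideanSpace ℝ (Fin n)) := by
    apply Metric.equicontinuous_of_continuity_modulus (fun d => C * d)
    · have : Filter.Tendsto (fun d : ℝ => C * d) (nhds 0) (nhds (C * 0)) :=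
        (continuous_const.mul continuous_id).tendsto 0
      simpa using this
    · rintro a b ⟨g, m, rfl⟩
      rw [hfapp, hfapp]
      calc dist (x m (a : ℝ)) (x m (b : ℝ)) ≤ C * dist (a : ℝ) (b : ℝ) :=
            (hlip m).dist_le_mul _ _
        _ = C * dist a b := by rw [Subtype.dist_eq]
  have hAcomp : IsCompact (closure A) :=
    BoundedContinuousFunction.arzela_ascoli s hscomp A (fun g t hg => by
      obtain ⟨m, rfl⟩ := hg; exact in_s m t) equicont
  have hmem : ∀ m, f m ∈ closure A := fun m => subset_closure ⟨m, rfl⟩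
  obtain ⟨g, -, φ, hφ, hconv⟩ := hAcomp.tendsto_subseq hmem
  -- uniform convergence of the coercions
  have huconv : TendstoUniformly (fun m => ⇑(f (φ m))) ⇑g Filter.atTop :=
    BoundedContinuousFunction.tendsto_iff_tendstoUniformly.mp hconv
  -- define the limit curve
  have hTT : -T ≤ T := by linarith
  refine ⟨φ, hφ, fun t => g (Set.projIcc (-T) T hTT t), ?_, ?_, ?_, ?_⟩
  · exact (g.continuous.comp (continuous_projIcc)).continuousOn
  · -- y 0 = p
    have h0 : (0:ℝ) ∈ Set.Icc (-T) T := ⟨by linarith, le_of_lt hT⟩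
    have hpt : Filter.Tendsto (fun m => f (φ m) ⟨0, h0⟩) Filter.atTop
        (nhds (g ⟨0, h0⟩)) := huconv.tendsto_at _
    have hconstp : ∀ m, f (φ m) ⟨0, h0⟩ = p := by
      intro m; rw [hfapp]; exact hx0 (φ m)
    have : Filter.Tendsto (fun _ : ℕ => p) Filter.atTop (nhds (g ⟨0, h0⟩)) := by
      simpa [hconstp] using hpt
    have := tendsto_nhds_unique this tendsto_const_nhds
    show g (Set.projIcc (-T) T hTT 0) = p
    rw [Set.projIcc_of_mem hTT h0]
    exact this
  · -- uniform convergence on Icc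
    rw [tendstoUniformlyOn_iff_tendstoUniformly_comp_coe]
    have heq : ((fun t => g (Set.projIcc (-T) T hTT t)) ∘ ((↑) : Set.Icc (-T) T → ℝ))
        = ⇑g := by
      funext a
      simp [Function.comp, Set.projIcc_of_mem hTT a.2]
    rw [heq]
    exact huconv
  · -- zero locus
    intro t ht
    show U (g (Set.projIcc (-T) T hTT t)) = 0
    rw [Set.projIcc_of_mem hTT ht]
    have hpt : Filter.Tendsto (fun m => U (f (φ m) ⟨t, ht⟩)) Filter.atTop
        (nhds (U (g ⟨t, ht⟩))) :=
      ((hU.continuous.tendsto _).comp (huconv.tendsto_at ⟨t, ht⟩))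
    have hεφ : Filter.Tendsto (fun m => ε (φ m)) Filter.atTop (nhds 0) :=
      hεlim.comp hφ.tendsto_atTop
    have hbnd : Filter.Tendsto (fun m => (ε (φ m)) ^ 2 * ‖v₀‖ ^ 2 / 2)
        Filter.atTop (nhds 0) := by
      have : Filter.Tendsto (fun m => (ε (φ m)) ^ 2 * ‖v₀‖ ^ 2 / 2)
          Filter.atTop (nhds ((0:ℝ) ^ 2 * ‖v₀‖ ^ 2 / 2)) := by
        exact (((hεφ.pow 2).mul_const _).div_const _)
      simpa using this
    have hzero : Filter.Tendsto (fun m => U (f (φ m) ⟨t, ht⟩)) Filter.atTop (nhds 0) := by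
      refine tendsto_of_tendsto_of_tendsto_of_le_of_le tendsto_const_nhds hbnd ?_ ?_
      · intro m; exact hU0 _
      · intro m
        show U ((f (φ m)) ⟨t, ht⟩) ≤ ε (φ m) ^ 2 * ‖v₀‖ ^ 2 / 2
        rw [hfapp]
        exact hUle (φ m) t
    exact tendsto_nhds_unique hpt hzero
end
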